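/- arXiv:1911.01167 — 2 statements merged into one kernel-verified Lean document; each statement's English description precedes it below -/
import Mathlib

section
/- Let h be an exponentially distributed random variable with rate 1, and let p1, p2, λ > 0 with β = p1/p2. Then for any z with 0 ≤ z < β, the probability that (p1·h·λ)/(p2·h·λ + 1) < z equals 1 − exp(−z/((p1 − z·p2)·λ)), and for z ≥ β this probability equals 1. -/
open MeasureTheory ProbabilityTheory Real

/-!
On `h ≥ 0`, where the law `Exp(1)` lives, the SINR is strictly increasing in `h` and tends to
`β = p1 / p2` from below. So for `z ≥ β` the event `SINR < z` is almost sure, while for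
`0 ≤ z < β` it coincides almost surely with `h < z / ((p1 - z p2) λ)`, whose probability is read
off the exponential CDF.
-/

namespace ProbabilityTheory

lemma expMeasure_Iio_zero (r : ℝ) : expMeasure r (Set.Iio 0) = 0 := by
  rw [expMeasure, gammaMeasure, withDensity_apply _ measurableSet_Iio]
  exact lintegral_exponentialPDF_of_nonpos le_rfl

lemma ae_nonneg_expMeasure (r : ℝ) : ∀ᵐ x ∂expMeasure r, 0 ≤ x := by
  simp only [ae_iff, not_le]
  exact expMeasure_Iio_zero r

lemma expMeasure_Iio {r : ℝ} (hr : 0 < r) {c : ℝ} (hc : 0 ≤ c) :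
    expMeasure r (Set.Iio c) = ENNReal.ofReal (1 - exp (-(r * c))) := by
  have := isProbabilityMeasure_expMeasure hr
  have hc_null : expMeasure r {c} = 0 :=
    withDensity_absolutelyContinuous _ _ (Real.volume_singleton (a := c))
  rw [measure_congr (Iio_ae_eq_Iic' hc_null), ← ofReal_cdf, cdf_expMeasure_eq hr, if_pos hc]

end ProbabilityTheory

noncomputable def weakUserSINR (p1 p2 lam x : ℝ) : ℝ := p1 * x * lam / (p2 * x * lam + 1)

lemma weakUserSINR_lt_iff {p1 p2 lam x z : ℝ} (hp2 : 0 < p2) (hlam : 0 < lam) (hx : 0 ≤ x)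
    (hz : z * p2 < p1) :
    weakUserSINR p1 p2 lam x < z ↔ x < z / ((p1 - z * p2) * lam) := by
  have hden : 0 < p2 * x * lam + 1 := by positivity
  have hgap : 0 < (p1 - z * p2) * lam := mul_pos (by linarith) hlam
  rw [weakUserSINR, div_lt_iff₀ hden, lt_div_iff₀ hgap]
  constructor <;> intro h <;> linarith

lemma weakUserSINR_lt_div {p1 p2 lam x : ℝ} (hp1 : 0 < p1) (hp2 : 0 < p2) (hlam : 0 < lam)
    (hx : 0 ≤ x) : weakUserSINR p1 p2 lam x < p1 / p2 := by
  have hden : 0 < p2 * x * lam + 1 := by positivity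
  rw [weakUserSINR, div_lt_div_iff₀ hden hp2]
  linarith

theorem sinr_cdf_general
    {Ω : Type*} [MeasurableSpace Ω] (μ : Measure Ω)
    (h : Ω → ℝ) (hmeas : Measurable h)
    (hlaw : Measure.map h μ = expMeasure 1)
    (p1 p2 lam : ℝ) (hp1 : 0 < p1) (hp2 : 0 < p2) (hlam : 0 < lam)
    (z : ℝ) :
    (0 ≤ z → z < p1 / p2 →
      μ {ω | (p1 * h ω * lam) / (p2 * h ω * lam + 1) < z}
        = ENNReal.ofReal (1 - Real.exp (-(z / ((p1 - z * p2) * lam))))) ∧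
    (p1 / p2 ≤ z →
      μ {ω | (p1 * h ω * lam) / (p2 * h ω * lam + 1) < z} = 1) := by
  have hS : MeasurableSet {x | weakUserSINR p1 p2 lam x < z} :=
    measurableSet_lt (by unfold weakUserSINR; fun_prop) measurable_const
  have hpull : μ {ω | (p1 * h ω * lam) / (p2 * h ω * lam + 1) < z}
      = expMeasure 1 {x | weakUserSINR p1 p2 lam x < z} := by
    rw [← hlaw, Measure.map_apply hmeas hS]
    rfl
  rw [hpull]
  constructor
  · intro hz0 hzβ
    have hz : z * p2 < p1 := (lt_div_iff₀ hp2).mp hzβ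
    have hevent : {x | weakUserSINR p1 p2 lam x < z}
        =ᵐ[expMeasure 1] Set.Iio (z / ((p1 - z * p2) * lam)) := by
      filter_upwards [ae_nonneg_expMeasure 1] with x hx
      exact propext (weakUserSINR_lt_iff hp2 hlam hx hz)
    rw [measure_congr hevent, expMeasure_Iio one_pos (by positivity), one_mul]
  · intro hzβ
    have := isProbabilityMeasure_expMeasure one_pos
    have hevent : {x | weakUserSINR p1 p2 lam x < z} =ᵐ[expMeasure 1] Set.univ := by
      filter_upwards [ae_nonneg_expMeasure 1] with x hx
      exact eq_true ((weakUserSINR_lt_div hp1 hp2 hlam hx).trans_le hzβ)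
    rw [measure_congr hevent, measure_univ]

/-- CDF of the weak user's single-round NOMA SINR `(p1·h·λ)/(p2·h·λ + 1)`
for Rayleigh fading (`h ~ Exp(1)`). -/
theorem sinr_cdf
    {Ω : Type*} [MeasurableSpace Ω] (μ : Measure Ω) [IsProbabilityMeasure μ]
    (h : Ω → ℝ) (hmeas : Measurable h)
    (hlaw : Measure.map h μ = expMeasure 1)
    (p1 p2 lam : ℝ) (hp1 : 0 < p1) (hp2 : 0 < p2) (hlam : 0 < lam)
    (z : ℝ) :
    (0 ≤ z → z < p1 / p2 →
      μ {ω | (p1 * h ω * lam) / (p2 * h ω * lam + 1) < z}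
        = ENNReal.ofReal (1 - Real.exp (-(z / ((p1 - z * p2) * lam))))) ∧
    (p1 / p2 ≤ z →
      μ {ω | (p1 * h ω * lam) / (p2 * h ω * lam + 1) < z} = 1) :=
  sinr_cdf_general μ h hmeas hlaw p1 p2 lam hp1 hp2 hlam z
end

section
/- Let h be exponentially distributed with rate 1 and λ, p1, p2 > 0 with β = p1/p2. The random variable X = (p1·h·λ)/(p2·h·λ + 1) has probability density function f(z) = p1/(λ·(p1 − z·p2)²) · exp(−z/(λ·(p1 − z·p2))) for z ∈ [0, β), and density 0 outside [0, β). -/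
/-!
On `[0, ∞)` the map `x ↦ p1 x λ / (p2 x λ + 1)` is a bijection onto `[0, p1/p2)` with inverse
`ψ z = z / (λ (p1 - z p2))` (`sinrInv`). Pushing the exponential density `e^{-x}` forward through
it is the one-dimensional change of variables `x = ψ z`, which yields the density
`ψ'(z) e^{-ψ z}` with `ψ'(z) = p1 / (λ (p1 - z p2)²)`.
-/

open MeasureTheory ProbabilityTheory Real Set

theorem map_withDensity_indicator_image {g ψ ψ' : ℝ → ℝ} {B : Set ℝ} (hB : MeasurableSet B)
    (hg : Measurable g) (hψ : ∀ z ∈ B, HasDerivWithinAt ψ (ψ' z) B z) (hgψ : LeftInvOn g ψ B)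
    (f : ℝ → ENNReal) :
    (volume.withDensity ((ψ '' B).indicator f)).map g
      = volume.withDensity (B.indicator fun z => ENNReal.ofReal |ψ' z| * f (ψ z)) := by
  have hψB : MeasurableSet (ψ '' B) :=
    measurable_image_of_fderivWithin hB (fun z hz => (hψ z hz).hasFDerivWithinAt) hgψ.injOn
  ext s hs
  rw [Measure.map_apply hg hs, withDensity_apply _ (hg hs), withDensity_apply _ hs,
    lintegral_indicator hψB, lintegral_indicator hB, Measure.restrict_restrict hψB,
    Measure.restrict_restrict hB, inter_comm _ (g ⁻¹' s), ← hgψ.image_inter', inter_comm B,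
    lintegral_image_eq_lintegral_abs_deriv_mul (hs.inter hB)
      (fun z hz => (hψ z hz.2).mono inter_subset_right) (hgψ.injOn.mono inter_subset_right)]

theorem expMeasure_eq_withDensity_indicator (r : ℝ) :
    expMeasure r
      = volume.withDensity ((Ici 0).indicator fun x => ENNReal.ofReal (r * exp (-(r * x)))) := by
  change volume.withDensity (exponentialPDF r) = _
  congr 1
  ext x
  by_cases hx : 0 ≤ x <;> simp [exponentialPDF_eq, hx]

noncomputable def sinr (p1 p2 lam x : ℝ) : ℝ := p1 * x * lam / (p2 * x * lam + 1)

noncomputable def sinrInv (p1 p2 lam z : ℝ) : ℝ := z / (lam * (p1 - z * p2))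

section
variable {p1 p2 lam : ℝ}

theorem measurable_sinr : Measurable (sinr p1 p2 lam) := by
  unfold sinr; fun_prop

theorem sinr_sinrInv (hp1 : p1 ≠ 0) (hlam : lam ≠ 0) {z : ℝ} (hz : p1 - z * p2 ≠ 0) :
    sinr p1 p2 lam (sinrInv p1 p2 lam z) = z := by
  have hden : p2 * sinrInv p1 p2 lam z * lam + 1 = p1 / (p1 - z * p2) := by
    rw [sinrInv, eq_div_iff hz, add_mul, one_mul, mul_assoc, mul_assoc p2,
      div_mul_cancel₀ _ (mul_ne_zero hlam hz)]
    ring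
  rw [sinr, hden, div_eq_iff (div_ne_zero hp1 hz), sinrInv]
  field_simp

theorem sinrInv_sinr (hp1 : p1 ≠ 0) (hlam : lam ≠ 0) {x : ℝ} (hx : p2 * x * lam + 1 ≠ 0) :
    sinrInv p1 p2 lam (sinr p1 p2 lam x) = x := by
  have hsub : p1 - sinr p1 p2 lam x * p2 = p1 / (p2 * x * lam + 1) := by
    rw [sinr, div_mul_eq_mul_div, sub_div' hx]
    ring
  rw [sinrInv, hsub, div_eq_iff (mul_ne_zero hlam (div_ne_zero hp1 hx)), sinr]
  ring

theorem hasDerivAt_sinrInv (hlam : lam ≠ 0) {z : ℝ} (hz : p1 - z * p2 ≠ 0) :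
    HasDerivAt (sinrInv p1 p2 lam) (p1 / (lam * (p1 - z * p2) ^ 2)) z := by
  have hden : HasDerivAt (fun z => lam * (p1 - z * p2)) (lam * (0 - 1 * p2)) z :=
    ((hasDerivAt_const z p1).sub ((hasDerivAt_id z).mul_const p2)).const_mul lam
  refine ((hasDerivAt_id' z).div hden (mul_ne_zero hlam hz)).congr_deriv ?_
  field_simp
  ring

theorem sub_mul_pos_of_lt_div (hp2 : 0 < p2) {z : ℝ} (hz : z < p1 / p2) : 0 < p1 - z * p2 :=
  sub_pos.2 ((lt_div_iff₀ hp2).1 hz)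

theorem invOn_sinr_sinrInv (hp1 : 0 < p1) (hp2 : 0 < p2) (hlam : 0 < lam) :
    InvOn (sinr p1 p2 lam) (sinrInv p1 p2 lam) (Ico 0 (p1 / p2)) (Ici 0) :=
  ⟨fun _ hz => sinr_sinrInv hp1.ne' hlam.ne' (sub_mul_pos_of_lt_div hp2 hz.2).ne',
    fun x hx => sinrInv_sinr hp1.ne' hlam.ne' (by have : (0:ℝ) ≤ x := hx; positivity)⟩

theorem image_sinrInv_Ico (hp1 : 0 < p1) (hp2 : 0 < p2) (hlam : 0 < lam) :
    sinrInv p1 p2 lam '' Ico 0 (p1 / p2) = Ici 0 := by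
  refine ((invOn_sinr_sinrInv hp1 hp2 hlam).bijOn ?_ ?_).image_eq
  · intro z ⟨hz, hzβ⟩
    have hD := sub_mul_pos_of_lt_div hp2 hzβ
    exact div_nonneg hz (by positivity)
  · intro x (hx : 0 ≤ x)
    have hD : 0 < p2 * x * lam + 1 := by positivity
    refine ⟨by unfold sinr; positivity, ?_⟩
    rw [sinr, div_lt_div_iff₀ hD hp2]
    nlinarith
end

theorem sinr_pdf_general
    {Ω : Type*} [MeasurableSpace Ω] (μ : Measure Ω)
    (h : Ω → ℝ) (hmeas : Measurable h)
    (hlaw : Measure.map h μ = expMeasure 1)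
    (p1 p2 lam : ℝ) (hp1 : 0 < p1) (hp2 : 0 < p2) (hlam : 0 < lam) :
    Measure.map (fun ω => (p1 * h ω * lam) / (p2 * h ω * lam + 1)) μ
      = volume.withDensity (fun z =>
          if z ∈ Ico (0 : ℝ) (p1 / p2) then
            ENNReal.ofReal (p1 / (lam * (p1 - z * p2) ^ 2)
              * Real.exp (-(z / (lam * (p1 - z * p2)))))
          else 0) := by
  have hderiv (z : ℝ) (hz : z ∈ Ico 0 (p1 / p2)) :
      HasDerivWithinAt (sinrInv p1 p2 lam) (p1 / (lam * (p1 - z * p2) ^ 2)) (Ico 0 (p1 / p2)) z :=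
    (hasDerivAt_sinrInv hlam.ne' (sub_mul_pos_of_lt_div hp2 hz.2).ne').hasDerivWithinAt
  rw [show (fun ω => (p1 * h ω * lam) / (p2 * h ω * lam + 1)) = sinr p1 p2 lam ∘ h from rfl,
    ← Measure.map_map measurable_sinr hmeas, hlaw, expMeasure_eq_withDensity_indicator,
    ← image_sinrInv_Ico hp1 hp2 hlam, map_withDensity_indicator_image measurableSet_Ico
      measurable_sinr hderiv (invOn_sinr_sinrInv hp1 hp2 hlam).1]
  congr 1
  ext z
  rw [indicator_apply]
  split_ifs with hz
  · have hD := sub_mul_pos_of_lt_div hp2 hz.2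
    rw [abs_of_pos (by positivity), one_mul, one_mul, ← ENNReal.ofReal_mul (by positivity),
      sinrInv]
  · rfl

/-- The single-round NOMA SINR `X = (p1·h·λ)/(p2·h·λ + 1)` with `h ~ Exp(1)` has the
probability density `f(z) = p1/(λ(p1 - z p2)²) · exp(-z/(λ(p1 - z p2)))` on `[0, p1/p2)`
and `0` elsewhere. -/
theorem sinr_pdf
    {Ω : Type*} [MeasurableSpace Ω] (μ : Measure Ω) [IsProbabilityMeasure μ]
    (h : Ω → ℝ) (hmeas : Measurable h)
    (hlaw : Measure.map h μ = expMeasure 1)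
    (p1 p2 lam : ℝ) (hp1 : 0 < p1) (hp2 : 0 < p2) (hlam : 0 < lam) :
    Measure.map (fun ω => (p1 * h ω * lam) / (p2 * h ω * lam + 1)) μ
      = volume.withDensity (fun z =>
          if z ∈ Ico (0 : ℝ) (p1 / p2) then
            ENNReal.ofReal (p1 / (lam * (p1 - z * p2) ^ 2)
              * Real.exp (-(z / (lam * (p1 - z * p2)))))
          else 0) :=
  sinr_pdf_general μ h hmeas hlaw p1 p2 lam hp1 hp2 hlam
end
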